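/- Let 𝔯 be a relational database over schema R and a ∈ R. For any X ⊆ R with a ∉ X, the functional dependency X → a holds in 𝔯 if and only if X is a hitting set of the hypergraph 𝒟_a = {D(r,s) \ {a} : r, s ∈ 𝔯, r(a) ≠ s(a)} of punctured difference sets. Moreover, X → a is a minimal, valid, non-trivial functional dependency of 𝔯 if and only if X ⊆ R \ {a} is a minimal hitting set of 𝒟_a. -/
import Mathlib


/-- The functional dependency `X → a` holds in `db`: any two rows that agree on every
attribute of `X` also agree on `a`. -/
def FDHolds {R V : Type*} (db : Set (R → V)) (X : Set R) (a : R) : Prop :=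
  ∀ r ∈ db, ∀ s ∈ db, (∀ b ∈ X, r b = s b) → r a = s a

/-- The difference set of two rows: the attributes on which they disagree. -/
def diffSet {R V : Type*} (r s : R → V) : Set R := {b | r b ≠ s b}

/-- The hypergraph `𝒟_a` of punctured difference sets:
`{D(r,s) \ {a} : r, s ∈ db, r(a) ≠ s(a)}`. -/
def puncturedDiffSets {R V : Type*} (db : Set (R → V)) (a : R) : Set (Set R) :=
  {D | ∃ r ∈ db, ∃ s ∈ db, r a ≠ s a ∧ D = diffSet r s \ {a}}

/-- `T` is a hitting set of the hypergraph `H`: it intersects every edge. -/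
def IsHittingSet {α : Type*} (H : Set (Set α)) (T : Set α) : Prop :=
  ∀ E ∈ H, (T ∩ E).Nonempty

/-- `T` is an inclusion-wise minimal hitting set of the hypergraph `H`. -/
def IsMinHittingSet {α : Type*} (H : Set (Set α)) (T : Set α) : Prop :=
  IsHittingSet H T ∧ ∀ T' ⊂ T, ¬ IsHittingSet H T'

/-- For any `X ⊆ R` with `a ∉ X`, the FD `X → a` holds in `𝔯` iff `X` is a hitting set
of the hypergraph `𝒟_a` of punctured difference sets. Moreover, `X → a` is a minimal,
valid, non-trivial FD of `𝔯` iff `X ⊆ R \ {a}` is a minimal hitting set of `𝒟_a`. -/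
theorem fd_iff_hittingSet_puncturedDiffSets {R V : Type*} (db : Set (R → V))
    (hfin : db.Finite) (a : R) :
    (∀ X : Set R, a ∉ X →
        (FDHolds db X a ↔ IsHittingSet (puncturedDiffSets db a) X)) ∧
      (∀ X : Set R,
        (a ∉ X ∧ FDHolds db X a ∧ ∀ X' ⊂ X, ¬ FDHolds db X' a) ↔
          (a ∉ X ∧ IsMinHittingSet (puncturedDiffSets db a) X)) := by

  have key : ∀ X : Set R, a ∉ X →
      (FDHolds db X a ↔ IsHittingSet (puncturedDiffSets db a) X) := by
    intro X haX
    constructor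
    · intro hfd E hE
      obtain ⟨r, hr, s, hs, hras, rfl⟩ := hE
      by_contra hne
      rw [Set.not_nonempty_iff_eq_empty] at hne
      apply hras
      apply hfd r hr s hs
      intro b hbX
      by_contra hb
      have : b ∈ X ∩ (diffSet r s \ {a}) := ⟨hbX, hb, fun h => haX (h ▸ hbX)⟩
      simp [hne] at this
    · intro hhit r hr s hs hagree
      by_contra hras
      obtain ⟨b, hbX, hbd, -⟩ := hhit _ ⟨r, hr, s, hs, hras, rfl⟩
      exact hbd (hagree b hbX)
  refine ⟨key, fun X => ?_⟩
  constructor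
  · rintro ⟨haX, hfd, hmin⟩
    refine ⟨haX, (key X haX).mp hfd, fun X' hX' hX'hit => ?_⟩
    exact hmin X' hX' ((key X' fun h => haX (hX'.1 h)).mpr hX'hit)
  · rintro ⟨haX, hhit, hmin⟩
    refine ⟨haX, (key X haX).mpr hhit, fun X' hX' hX'fd => ?_⟩
    exact hmin X' hX' ((key X' fun h => haX (hX'.1 h)).mp hX'fd)
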